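/- Let t ≥ 2 and m ≥ 1 be integers. The map sending a partition λ to the tuple (n₁(λ), n₂(λ), …, n_{t−1}(λ)) is a bijection from the set of (t, mt+1)-core partitions with distinct parts onto the set of tuples (x₁,…,x_{t−1}) of natural numbers with 0 ≤ x_i ≤ m for all 1 ≤ i ≤ t−1 and x_i·x_{i+1} = 0 for all 1 ≤ i ≤ t−2. -/

import Mathlib

/-- A partition: a finite weakly decreasing list of positive integers. -/
structure Partn where
  parts : List ℕ
  pos : ∀ p ∈ parts, 0 < p
  sorted : parts.Pairwise (· ≥ ·)

namespace Partn

/-- The size of a partition: the sum of its parts. -/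
def size (l : Partn) : ℕ := l.parts.sum

/-- The number of rows `k` (0-indexed) with `λ_k ≥ j` (the length of column `j`). -/
def colLen (l : Partn) (j : ℕ) : ℕ := (l.parts.filter (fun p => j ≤ p)).length

/-- The hook length of the box in row `i` (0-indexed) and column `j` (1-indexed):
`λ_i − j + #{k : λ_k ≥ j} − i + 1` (with 1-indexed rows). -/
def hook (l : Partn) (i j : ℕ) : ℕ :=
  (l.parts.getD i 0 - j) + (l.colLen j - (i + 1)) + 1

/-- A partition is a `t`-core if none of its hook lengths is divisible by `t`. -/
def IsCore (t : ℕ) (l : Partn) : Prop :=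
  ∀ i j : ℕ, i < l.parts.length → 1 ≤ j → j ≤ l.parts.getD i 0 → ¬ (t ∣ l.hook i j)

/-- A partition has distinct parts if its parts are strictly decreasing. -/
def DistinctParts (l : Partn) : Prop := l.parts.Pairwise (· > ·)

/-- The β-set of a partition: `{λ_i + ℓ − i : 1 ≤ i ≤ ℓ}` (1-indexed). -/
def betaSet (l : Partn) : Finset ℕ :=
  (Finset.range l.parts.length).image
    (fun i => l.parts.getD i 0 + (l.parts.length - 1 - i))

/-- `nFn t i l` is the number of elements of the β-set of `l` congruent to `i` mod `t`. -/
def nFn (t i : ℕ) (l : Partn) : ℕ :=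
  (l.betaSet.filter (fun x => x % t = i)).card

end Partn

/-!
Everything is read off the β-set. The hook of the box `(i, j)` has length `β_i - g_j`, where
`g_j` is the `j`-th gap of the β-set, and the gaps below `β_i` are exactly `g_1, …, g_{λ_i}`.
Hence `λ` is a `t`-core iff every position a positive multiple of `t` below a β-number is again
a β-number, and `λ` has distinct parts iff its β-set contains no two
consecutive numbers. On the `t`-abacus the beads of a `t`-core therefore fill the bottom of each
runner, runner `0` is empty because `0` is never a β-number, and the β-set is determined by the
counts `n_1, …, n_{t-1}`; conversely every choice of counts is realised by a partition.
Given distinct parts, the `(mt+1)`-core condition amounts to `n_r ≤ m`: a bead at `r + mt` would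
force a bead at `r - 1`, next to the bead at `r`; conversely, if all `n_r ≤ m` then every bead
lies below `mt + 1`. Finally, two consecutive nonempty runners `r` and `r + 1` would put beads at
`r` and `r + 1`.
-/

open Finset

def IsCoreSet (t : ℕ) (B : Finset ℕ) : Prop :=
  ∀ x ∈ B, ∀ y < x, t ∣ x - y → y ∈ B

def countMod (t r : ℕ) (B : Finset ℕ) : ℕ := #{x ∈ B | x % t = r}

lemma add_mul_mod_of_lt {t r : ℕ} (hr : r < t) (k : ℕ) : (r + k * t) % t = r := by
  rw [Nat.add_mul_mod_self_right, Nat.mod_eq_of_lt hr]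

lemma add_mul_injective {t : ℕ} (ht : 0 < t) (r : ℕ) : Function.Injective (r + · * t) :=
  fun _ _ h => Nat.eq_of_mul_eq_mul_right ht (Nat.add_left_cancel h)

lemma isCoreSet_of_forall_lt {s : ℕ} {B : Finset ℕ} (hB : ∀ x ∈ B, x < s) : IsCoreSet s B :=
  fun x hx y hy hdvd => absurd (Nat.le_of_dvd (by omega) hdvd) (by have := hB x hx; omega)

namespace IsCoreSet

variable {t : ℕ} {B : Finset ℕ}

lemma add_mul_mem_of_le (hB : IsCoreSet t B) {r j k : ℕ} (hjk : j ≤ k) (hk : r + k * t ∈ B) :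
    r + j * t ∈ B := by
  obtain heq | hlt := (Nat.add_le_add_left (Nat.mul_le_mul_right t hjk) r).eq_or_lt
  · rwa [heq]
  · exact hB _ hk _ hlt ⟨k - j, by rw [Nat.add_sub_add_left, ← Nat.sub_mul, mul_comm]⟩

lemma add_mul_mem_iff (hB : IsCoreSet t B) {r : ℕ} (hr : r < t) (k : ℕ) :
    r + k * t ∈ B ↔ k < countMod t r B := by
  have ht : 0 < t := by omega
  constructor
  · intro hk
    have hsub : (range (k + 1)).image (r + · * t) ⊆ {x ∈ B | x % t = r} := by
      intro x hx
      obtain ⟨j, hj, rfl⟩ := mem_image.mp hx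
      exact mem_filter.mpr
        ⟨hB.add_mul_mem_of_le (Nat.lt_succ_iff.mp (mem_range.mp hj)) hk, add_mul_mod_of_lt hr j⟩
    have := card_le_card hsub
    rwa [card_image_of_injective _ (add_mul_injective ht r), card_range] at this
  · intro hk
    by_contra hnk
    have hsub : {x ∈ B | x % t = r} ⊆ (range k).image (r + · * t) := by
      intro x hx
      obtain ⟨hxB, hxr⟩ := mem_filter.mp hx
      have hx_eq : r + x / t * t = x := hxr ▸ Nat.mod_add_div' x t
      refine mem_image.mpr ⟨x / t, mem_range.mpr ?_, hx_eq⟩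
      by_contra hle
      exact hnk (hB.add_mul_mem_of_le (not_lt.mp hle) (by rwa [hx_eq]))
    have := card_le_card hsub
    rw [card_image_of_injective _ (add_mul_injective ht r), card_range] at this
    exact absurd hk (not_lt.mpr this)

lemma mod_ne_zero (hB : IsCoreSet t B) (h0 : 0 ∉ B) {x : ℕ} (hx : x ∈ B) : x % t ≠ 0 := by
  intro hxt
  have hx_eq : 0 + x / t * t = x := by rw [← hxt]; exact Nat.mod_add_div' x t
  exact h0 (by simpa using hB.add_mul_mem_of_le (Nat.zero_le _) (hx_eq ▸ hx))

lemma countMod_le {m : ℕ} (hB : IsCoreSet t B) (hB' : IsCoreSet (m * t + 1) B)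
    (hd : ∀ x ∈ B, x + 1 ∉ B) {r : ℕ} (hr : 0 < r) (hrt : r < t) : countMod t r B ≤ m := by
  by_contra! hm
  have hr_mem : r ∈ B := by simpa using (hB.add_mul_mem_iff hrt 0).mpr (by omega)
  have hrm_mem : r + m * t ∈ B := (hB.add_mul_mem_iff hrt m).mpr hm
  -- `r - 1` lies `m * t + 1` below the bead `r + m * t`.
  have hr1_mem : r - 1 ∈ B := hB' _ hrm_mem _ (by omega) ⟨1, by omega⟩
  exact hd _ hr1_mem (by rwa [Nat.sub_add_cancel hr])

lemma countMod_mul_countMod_add_one_eq_zero (hB : IsCoreSet t B) (hd : ∀ x ∈ B, x + 1 ∉ B)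
    {r : ℕ} (hrt : r + 1 < t) : countMod t r B * countMod t (r + 1) B = 0 := by
  by_contra! h
  have hr := (hB.add_mul_mem_iff (r := r) (by omega) 0).mpr
    (Nat.pos_of_ne_zero (left_ne_zero_of_mul h))
  have hr1 := (hB.add_mul_mem_iff hrt 0).mpr (Nat.pos_of_ne_zero (right_ne_zero_of_mul h))
  simp only [zero_mul, add_zero] at hr hr1
  exact hd r hr hr1

end IsCoreSet

def abacus (t : ℕ) (x : Fin (t - 1) → ℕ) : Finset ℕ :=
  univ.biUnion fun i => (range (x i)).image ((i : ℕ) + 1 + · * t)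

section Abacus

variable {t : ℕ} {x : Fin (t - 1) → ℕ}

lemma mem_abacus {y : ℕ} : y ∈ abacus t x ↔ ∃ i, ∃ k < x i, (i : ℕ) + 1 + k * t = y := by
  simp [abacus]

lemma zero_notMem_abacus : 0 ∉ abacus t x := by
  simp [mem_abacus]

lemma countMod_abacus (i : Fin (t - 1)) : countMod t (i + 1) (abacus t x) = x i := by
  have hi : (i : ℕ) + 1 < t := by omega
  have hrunner :
      {y ∈ abacus t x | y % t = i + 1} = (range (x i)).image ((i : ℕ) + 1 + · * t) := by
    ext y
    simp only [mem_filter, mem_abacus, mem_image, mem_range]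
    constructor
    · rintro ⟨⟨j, k, hk, rfl⟩, hmod⟩
      obtain rfl : j = i := Fin.ext (by rw [add_mul_mod_of_lt (by omega)] at hmod; omega)
      exact ⟨k, hk, rfl⟩
    · rintro ⟨k, hk, rfl⟩
      exact ⟨⟨i, k, hk, rfl⟩, add_mul_mod_of_lt hi k⟩
  rw [countMod, hrunner, card_image_of_injective _ (add_mul_injective (by omega) _), card_range]

lemma isCoreSet_abacus : IsCoreSet t (abacus t x) := by
  rintro _ hx y hy hdvd
  obtain ⟨i, k, hk, rfl⟩ := mem_abacus.mp hx
  have hi : (i : ℕ) + 1 < t := by omega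
  have hmod : y % t = i + 1 := by
    rw [(Nat.modEq_iff_dvd' hy.le).mpr hdvd, add_mul_mod_of_lt hi]
  have hy_eq : (i : ℕ) + 1 + y / t * t = y := hmod ▸ Nat.mod_add_div' y t
  refine mem_abacus.mpr ⟨i, y / t, ?_, hy_eq⟩
  exact (Nat.lt_of_mul_lt_mul_right (a := t) (by omega)).trans hk

lemma lt_of_mem_abacus {m : ℕ} (hx : ∀ i, x i ≤ m) {y : ℕ} (hy : y ∈ abacus t x) :
    y < m * t + 1 := by
  obtain ⟨i, k, hk, rfl⟩ := mem_abacus.mp hy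
  have hkm : (k + 1) * t ≤ m * t := Nat.mul_le_mul_right t (hk.trans_le (hx i))
  rw [add_mul] at hkm
  omega

lemma add_one_notMem_abacus (hx : ∀ i j : Fin (t - 1), (j : ℕ) = i + 1 → x i * x j = 0)
    {y : ℕ} (hy : y ∈ abacus t x) : y + 1 ∉ abacus t x := by
  obtain ⟨i, k, hk, rfl⟩ := mem_abacus.mp hy
  intro hy1
  obtain ⟨j, k', hk', hj⟩ := mem_abacus.mp hy1
  have hmod := congrArg (· % t) hj
  simp only [add_mul_mod_of_lt (show (j : ℕ) + 1 < t by omega)] at hmod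
  obtain hlt | heq : (i : ℕ) + 2 < t ∨ (i : ℕ) + 2 = t := by omega
  · rw [show (i : ℕ) + 1 + k * t + 1 = i + 2 + k * t by ring, add_mul_mod_of_lt hlt] at hmod
    have := hx i j (by omega)
    simp only [mul_eq_zero] at this
    omega
  · have hwrap : (i : ℕ) + 1 + k * t + 1 = (k + 1) * t := by rw [add_mul]; omega
    rw [hwrap, Nat.mul_mod_left] at hmod
    omega

end Abacus

lemma IsCoreSet.eq_abacus {t : ℕ} {B : Finset ℕ} (ht : 0 < t) (hB : IsCoreSet t B) (h0 : 0 ∉ B) :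
    B = abacus t (fun i => countMod t (i + 1) B) := by
  ext y
  rw [mem_abacus]
  constructor
  · intro hy
    have hyt := hB.mod_ne_zero h0 hy
    have hlt : y % t < t := Nat.mod_lt _ ht
    refine ⟨⟨y % t - 1, by omega⟩, y / t, ?_, ?_⟩ <;>
      simp only [Nat.sub_add_cancel (Nat.pos_of_ne_zero hyt), Nat.mod_add_div']
    rwa [← hB.add_mul_mem_iff hlt, Nat.mod_add_div']
  · rintro ⟨i, k, hk, rfl⟩
    exact (hB.add_mul_mem_iff (by omega) k).mpr hk

lemma Nat.add_sub_le_of_strictAntiOn {f : ℕ → ℕ} {n : ℕ} (hf : StrictAntiOn f (Set.Iio n))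
    {k k' : ℕ} (hkk' : k ≤ k') (hk' : k' < n) : f k' + (k' - k) ≤ f k := by
  induction k', hkk' using Nat.le_induction with
  | base => simp
  | succ k' hkk' ih =>
    have := hf (Set.mem_Iio.mpr (by omega)) hk' (Nat.lt_succ_self k')
    have := ih (by omega)
    omega

namespace Partn

def part (l : Partn) (k : ℕ) : ℕ := l.parts.getD k 0

def betaNum (l : Partn) (k : ℕ) : ℕ := l.part k + (l.parts.length - 1 - k)

lemma nFn_eq_countMod (t r : ℕ) (l : Partn) : l.nFn t r = countMod t r l.betaSet := rfl

lemma ext_parts {l₁ l₂ : Partn} (h : l₁.parts = l₂.parts) : l₁ = l₂ := by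
  cases l₁
  cases l₂
  congr

variable {l : Partn}

lemma part_eq_getElem {k : ℕ} (hk : k < l.parts.length) : l.part k = l.parts[k] :=
  List.getD_eq_getElem _ _ hk

lemma one_le_part {k : ℕ} (hk : k < l.parts.length) : 1 ≤ l.part k :=
  part_eq_getElem hk ▸ l.pos _ (List.getElem_mem hk)

lemma part_le_part {k k' : ℕ} (hkk' : k ≤ k') (hk' : k' < l.parts.length) :
    l.part k' ≤ l.part k := by
  rw [part_eq_getElem (hkk'.trans_lt hk'), part_eq_getElem hk']
  exact l.sorted.rel_get_of_le (a := ⟨k, hkk'.trans_lt hk'⟩) (b := ⟨k', hk'⟩) hkk'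

lemma betaNum_lt_betaNum {k k' : ℕ} (hkk' : k < k') (hk' : k' < l.parts.length) :
    l.betaNum k' < l.betaNum k := by
  have := part_le_part hkk'.le hk'
  unfold betaNum
  omega

lemma betaNum_strictAntiOn : StrictAntiOn l.betaNum (Set.Iio l.parts.length) :=
  fun _ _ _ hk' hkk' => betaNum_lt_betaNum hkk' hk'

lemma mem_betaSet {x : ℕ} : x ∈ l.betaSet ↔ ∃ k < l.parts.length, l.betaNum k = x := by
  simp [betaSet, betaNum, part]

lemma zero_notMem_betaSet : 0 ∉ l.betaSet := by
  rintro h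
  obtain ⟨k, hk, hk0⟩ := mem_betaSet.mp h
  have := one_le_part hk
  unfold betaNum at hk0
  omega

lemma distinctParts_iff_part_lt :
    l.DistinctParts ↔ ∀ k, k + 1 < l.parts.length → l.part (k + 1) < l.part k := by
  rw [DistinctParts, ← List.isChain_iff_pairwise, List.isChain_iff_getElem]
  refine forall₂_congr fun k hk => ?_
  rw [part_eq_getElem hk, part_eq_getElem (by omega)]

lemma distinctParts_iff : l.DistinctParts ↔ ∀ x ∈ l.betaSet, x + 1 ∉ l.betaSet := by
  rw [distinctParts_iff_part_lt]
  constructor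
  · rintro hd _ hx hx1
    obtain ⟨k', hk', rfl⟩ := mem_betaSet.mp hx
    obtain ⟨k, hk, hkk'⟩ := mem_betaSet.mp hx1
    have hlt : k < k' := (StrictAntiOn.lt_iff_gt betaNum_strictAntiOn hk' hk).mp (by omega)
    have hle : l.betaNum k' ≤ l.betaNum (k + 1) :=
      StrictAntiOn.antitoneOn betaNum_strictAntiOn (Set.mem_Iio.mpr (by omega)) hk' hlt
    have := hd k (by omega)
    unfold betaNum at hle hkk'
    omega
  · intro hd k hk
    by_contra! hle
    have hk1 : l.betaNum (k + 1) + 1 = l.betaNum k := by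
      have := part_le_part (k.le_add_right 1) hk
      unfold betaNum
      omega
    exact hd _ (mem_betaSet.mpr ⟨k + 1, hk, rfl⟩) (hk1 ▸ mem_betaSet.mpr ⟨k, by omega, rfl⟩)

lemma map_part_range : (List.range l.parts.length).map l.part = l.parts :=
  List.ext_getElem (by simp) fun k _ hk => by simp [part_eq_getElem hk]

lemma colLen_eq_card (j : ℕ) : l.colLen j = #{k ∈ range l.parts.length | j ≤ l.part k} := by
  rw [colLen]
  conv_lhs => rw [← map_part_range, List.filter_map, List.length_map]
  rfl

lemma lt_colLen_iff {k j : ℕ} : k < l.colLen j ↔ k < l.parts.length ∧ j ≤ l.part k := by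
  rw [colLen_eq_card]
  constructor
  · intro hk
    by_contra! hkj
    have hsub : {k ∈ range l.parts.length | j ≤ l.part k} ⊆ range k := by
      intro k' hk'
      simp only [mem_filter, mem_range] at hk' ⊢
      by_contra! hle
      exact (hkj (by omega)).not_ge (hk'.2.trans (part_le_part hle hk'.1))
    exact hk.not_ge (by simpa using card_le_card hsub)
  · rintro ⟨hk, hj⟩
    have hsub : range (k + 1) ⊆ {k ∈ range l.parts.length | j ≤ l.part k} := by
      intro k' hk'
      simp only [mem_filter, mem_range] at hk' ⊢
      exact ⟨by omega, hj.trans (part_le_part (by omega) hk)⟩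
    simpa using card_le_card hsub

lemma colLen_le_length (j : ℕ) : l.colLen j ≤ l.parts.length :=
  List.length_filter_le _ _

lemma colLen_antitone : Antitone l.colLen := fun _ _ hjj' =>
  le_of_forall_lt fun _ hk =>
    lt_colLen_iff.mpr ⟨(lt_colLen_iff.mp hk).1, hjj'.trans (lt_colLen_iff.mp hk).2⟩

/-- For `j ≥ 1` this is the `j`-th gap of the β-set, counted from `0` when `λ ≠ ∅`. -/
def gap (l : Partn) (j : ℕ) : ℕ := l.parts.length - 1 + j - l.colLen j

lemma hook_add_gap {i j : ℕ} (hi : i < l.parts.length) (hj : 1 ≤ j) (hji : j ≤ l.part i) :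
    l.hook i j + l.gap j = l.betaNum i := by
  have := lt_colLen_iff.mpr ⟨hi, hji⟩
  have := colLen_le_length (l := l) j
  rw [hook, gap, betaNum, ← part]
  omega

lemma gap_lt_betaNum {i j : ℕ} (hi : i < l.parts.length) (hj : 1 ≤ j) (hji : j ≤ l.part i) :
    l.gap j < l.betaNum i := by
  have := hook_add_gap hi hj hji
  rw [hook] at this
  omega

lemma gap_notMem_betaSet {j : ℕ} (hj : 1 ≤ j) : l.gap j ∉ l.betaSet := by
  rw [mem_betaSet]
  rintro ⟨k, hk, hkj⟩
  have := colLen_le_length (l := l) j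
  have := lt_colLen_iff (l := l) (k := k) (j := j)
  unfold betaNum gap at hkj
  by_cases hjk : j ≤ l.part k <;> omega

lemma gap_strictMonoOn : StrictMonoOn l.gap (Set.Ici 1) := by
  intro j hj j' _ hjj'
  have := colLen_antitone (l := l) hjj'.le
  have := colLen_le_length (l := l) j
  simp only [Set.mem_Ici] at hj
  unfold gap
  omega

lemma card_filter_mem_betaSet_range {i : ℕ} (hi : i < l.parts.length) :
    #{y ∈ range (l.betaNum i) | y ∈ l.betaSet} = l.parts.length - 1 - i := by
  have : {y ∈ range (l.betaNum i) | y ∈ l.betaSet} = (Ioo i l.parts.length).image l.betaNum := by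
    ext y
    simp only [mem_filter, mem_range, mem_betaSet, mem_image, mem_Ioo]
    constructor
    · rintro ⟨hy, k, hk, rfl⟩
      exact ⟨k, ⟨(StrictAntiOn.lt_iff_gt betaNum_strictAntiOn hk hi).mp hy, hk⟩, rfl⟩
    · rintro ⟨k, ⟨hik, hk⟩, rfl⟩
      exact ⟨betaNum_lt_betaNum hik hk, k, hk, rfl⟩
  rw [this, card_image_of_injOn (betaNum_strictAntiOn.injOn.mono fun k hk => by
    simp only [coe_Ioo, Set.mem_Ioo] at hk; exact Set.mem_Iio.mpr hk.2), Nat.card_Ioo]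
  omega

lemma image_gap_Icc {i : ℕ} (hi : i < l.parts.length) :
    (Icc 1 (l.part i)).image l.gap = {y ∈ range (l.betaNum i) | y ∉ l.betaSet} := by
  have hinj : Set.InjOn l.gap (Icc 1 (l.part i)) :=
    gap_strictMonoOn.injOn.mono fun j hj => by simp only [coe_Icc, Set.mem_Icc] at hj; exact hj.1
  refine eq_of_subset_of_card_le ?_ ?_
  · intro y hy
    obtain ⟨j, hj, rfl⟩ := mem_image.mp hy
    rw [mem_Icc] at hj
    exact mem_filter.mpr ⟨mem_range.mpr (gap_lt_betaNum hi hj.1 hj.2), gap_notMem_betaSet hj.1⟩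
  · have hsplit := card_filter_add_card_filter_not (s := range (l.betaNum i)) (· ∈ l.betaSet)
    rw [card_filter_mem_betaSet_range hi, card_range] at hsplit
    rw [card_image_of_injOn hinj, Nat.card_Icc]
    have : l.betaNum i = l.part i + (l.parts.length - 1 - i) := rfl
    omega

lemma isCore_iff {t : ℕ} : l.IsCore t ↔ IsCoreSet t l.betaSet := by
  constructor
  · intro hl x hx y hyx hdvd
    obtain ⟨i, hi, rfl⟩ := mem_betaSet.mp hx
    by_contra hy
    have : y ∈ {y ∈ range (l.betaNum i) | y ∉ l.betaSet} := mem_filter.mpr ⟨mem_range.mpr hyx, hy⟩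
    obtain ⟨j, hj, rfl⟩ := mem_image.mp ((image_gap_Icc hi).symm ▸ this)
    rw [mem_Icc] at hj
    have := hook_add_gap hi hj.1 hj.2
    exact hl i j hi hj.1 hj.2 (by rwa [show l.hook i j = l.betaNum i - l.gap j by omega])
  · intro hB i j hi hj hji hdvd
    have := hook_add_gap hi hj hji
    exact gap_notMem_betaSet hj <| hB _ (mem_betaSet.mpr ⟨i, hi, rfl⟩) _
      (gap_lt_betaNum hi hj hji) (by rwa [show l.betaNum i - l.gap j = l.hook i j by omega])

end Partn

lemma sort_getD_mem {B : Finset ℕ} {k : ℕ} (hk : k < #B) : (B.sort (· ≥ ·)).getD k 0 ∈ B := by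
  rw [List.getD_eq_getElem _ _ (by simpa using hk), ← mem_sort (· ≥ ·)]
  exact List.getElem_mem _

lemma sort_getD_strictAntiOn (B : Finset ℕ) :
    StrictAntiOn (fun k => (B.sort (· ≥ ·)).getD k 0) (Set.Iio #B) := by
  intro k hk k' hk' hkk'
  simp only [Set.mem_Iio] at hk hk'
  simp only [List.getD_eq_getElem _ _ (show k < (B.sort (· ≥ ·)).length by simpa using hk),
    List.getD_eq_getElem _ _ (show k' < (B.sort (· ≥ ·)).length by simpa using hk')]
  exact B.sortedGT_sort.getElem_lt_getElem_iff.mpr hkk'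

lemma sub_le_sort_getD {B : Finset ℕ} (hB : 0 ∉ B) {k : ℕ} (hk : k < #B) :
    #B - k ≤ (B.sort (· ≥ ·)).getD k 0 := by
  have hlast := sort_getD_mem (B := B) (k := #B - 1) (by omega)
  have := Nat.add_sub_le_of_strictAntiOn (sort_getD_strictAntiOn B) (k' := #B - 1)
    (by omega : k ≤ #B - 1) (by omega)
  have : (B.sort (· ≥ ·)).getD (#B - 1) 0 ≠ 0 := fun h => hB (h ▸ hlast)
  omega

namespace Partn

def ofSet (B : Finset ℕ) (hB : 0 ∉ B) : Partn where
  parts := (List.range #B).map fun k => (B.sort (· ≥ ·)).getD k 0 - (#B - 1 - k)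
  pos := by
    simp only [List.mem_map, List.mem_range]
    rintro _ ⟨k, hk, rfl⟩
    have := sub_le_sort_getD hB hk
    omega
  sorted := by
    rw [List.pairwise_iff_getElem]
    intro k k' hk hk' hkk'
    simp only [List.length_map, List.length_range] at hk hk'
    simp only [List.getElem_map, List.getElem_range]
    have := Nat.add_sub_le_of_strictAntiOn (sort_getD_strictAntiOn B) hkk'.le hk'
    omega

variable {B : Finset ℕ} {hB : 0 ∉ B}

lemma length_ofSet : (ofSet B hB).parts.length = #B := by
  simp [ofSet]

lemma part_ofSet {k : ℕ} (hk : k < #B) :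
    (ofSet B hB).part k = (B.sort (· ≥ ·)).getD k 0 - (#B - 1 - k) := by
  simp [part, ofSet, hk]

lemma betaNum_ofSet {k : ℕ} (hk : k < #B) :
    (ofSet B hB).betaNum k = (B.sort (· ≥ ·)).getD k 0 := by
  have := sub_le_sort_getD hB hk
  rw [betaNum, part_ofSet hk, length_ofSet]
  omega

lemma betaSet_ofSet : (ofSet B hB).betaSet = B := by
  ext x
  rw [mem_betaSet, length_ofSet]
  constructor
  · rintro ⟨k, hk, rfl⟩
    rw [betaNum_ofSet hk]
    exact sort_getD_mem hk
  · intro hx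
    obtain ⟨k, hk, rfl⟩ := List.getElem_of_mem ((B.mem_sort (· ≥ ·)).mpr hx)
    have hk' : k < #B := by simpa using hk
    exact ⟨k, hk', by rw [betaNum_ofSet hk', List.getD_eq_getElem]⟩

lemma sort_betaSet (l : Partn) :
    l.betaSet.sort (· ≥ ·) = (List.range l.parts.length).map l.betaNum := by
  refine List.SortedGT.eq_of_mem_iff (sortedGT_sort _) ?_ fun x => ?_
  · rw [List.sortedGT_iff_pairwise, List.pairwise_iff_getElem]
    intro k k' hk hk' hkk'
    simp only [List.length_map, List.length_range] at hk hk'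
    simpa using betaNum_lt_betaNum hkk' hk'
  · simp [mem_betaSet]

lemma ofSet_betaSet (l : Partn) : ofSet l.betaSet zero_notMem_betaSet = l := by
  have hcard : #l.betaSet = l.parts.length := by
    rw [← length_sort (· ≥ ·), sort_betaSet]
    simp
  refine ext_parts (List.ext_getElem (by rw [length_ofSet, hcard]) fun k hk hk' => ?_)
  rw [← part_eq_getElem hk, ← part_eq_getElem hk', part_ofSet (by omega), sort_betaSet, hcard,
    List.getD_eq_getElem _ _ (by simpa using hk'), List.getElem_map, List.getElem_range, betaNum]
  omega

lemma betaSet_injective : Function.Injective betaSet := fun l₁ l₂ h =>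
  calc l₁ = ofSet l₁.betaSet zero_notMem_betaSet := (ofSet_betaSet l₁).symm
    _ = ofSet l₂.betaSet zero_notMem_betaSet := by congr
    _ = l₂ := ofSet_betaSet l₂

end Partn

theorem bijection_t_mt_add_one_general (t m : ℕ) (ht : 2 ≤ t) :
    Set.BijOn (fun lam : Partn => fun i : Fin (t - 1) => Partn.nFn t ((i : ℕ) + 1) lam)
      {lam : Partn | (lam.IsCore t ∧ lam.IsCore (m * t + 1) ∧ lam.DistinctParts)}
      {x : Fin (t - 1) → ℕ | (∀ i, x i ≤ m) ∧
          ∀ i j : Fin (t - 1), (j : ℕ) = (i : ℕ) + 1 → x i * x j = 0} := by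
  simp only [Set.BijOn, Set.MapsTo, Set.InjOn, Set.SurjOn, Set.subset_def, Set.mem_image,
    Set.mem_ofPred_eq, Partn.isCore_iff, Partn.distinctParts_iff, Partn.nFn_eq_countMod]
  refine ⟨?_, ?_, ?_⟩
  · rintro l ⟨hct, hcm, hd⟩
    refine ⟨fun i => hct.countMod_le hcm hd i.val.succ_pos (by omega), fun i j hij => ?_⟩
    rw [hij]
    exact hct.countMod_mul_countMod_add_one_eq_zero hd (by omega)
  · rintro l₁ ⟨h₁, -, -⟩ l₂ ⟨h₂, -, -⟩ heq
    refine Partn.betaSet_injective ?_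
    rw [h₁.eq_abacus (by omega) Partn.zero_notMem_betaSet,
      h₂.eq_abacus (by omega) Partn.zero_notMem_betaSet, heq]
  · rintro x ⟨hxm, hx⟩
    refine ⟨Partn.ofSet (abacus t x) zero_notMem_abacus, ?_, ?_⟩ <;> rw [Partn.betaSet_ofSet]
    · exact ⟨isCoreSet_abacus, isCoreSet_of_forall_lt fun _ => lt_of_mem_abacus hxm,
        fun _ => add_one_notMem_abacus hx⟩
    · exact funext countMod_abacus

/-- `λ ↦ (n₁(λ), …, n_(t−1)(λ))` is a bijection from `(t, mt+1)`-core partitions with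
distinct parts onto sequences `(x₁, …, x_(t−1))` with `xᵢ ≤ m` and `xᵢ·x_(i+1) = 0`. -/
theorem bijection_t_mt_add_one (t m : ℕ) (ht : 2 ≤ t) (hm : 1 ≤ m) :
    Set.BijOn (fun lam : Partn => fun i : Fin (t - 1) => Partn.nFn t ((i : ℕ) + 1) lam)
      {lam : Partn | (lam.IsCore t ∧ lam.IsCore (m * t + 1) ∧ lam.DistinctParts)}
      {x : Fin (t - 1) → ℕ | (∀ i, x i ≤ m) ∧
          ∀ i j : Fin (t - 1), (j : ℕ) = (i : ℕ) + 1 → x i * x j = 0} :=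
  bijection_t_mt_add_one_general t m ht
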